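/- The primary number of G_{p,q} equals (1/2)(q−1)(r+1), where r = (p−1)/q; in particular prim(G_{p,q}) ≥ 2. -/

import Mathlib

open Multiplicative

namespace Mizerka

/-- The standing hypotheses: `p` and `q` are odd primes with `q ∣ p - 1`, and `i` is a
natural number with `i ≡ 1 (mod q)` whose multiplicative order modulo `p` equals `q`. -/
structure Hyp (p q i : ℕ) : Prop where
  hp : Nat.Prime p
  hq : Nat.Prime q
  hoddp : Odd p
  hoddq : Odd q
  hdvd : q ∣ p - 1
  hmod : i ≡ 1 [MOD q]
  hord : orderOf (i : ZMod p) = q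

namespace Hyp

variable {p q i : ℕ}

theorem coprime_q (h : Hyp p q i) : Nat.Coprime i q := by
  have h1 : i % q = 1 % q := h.hmod
  unfold Nat.Coprime
  rw [Nat.gcd_comm, Nat.gcd_rec, h1, ← Nat.gcd_rec, Nat.gcd_one_right]

theorem coprime_p (h : Hyp p q i) : Nat.Coprime i p := by
  haveI : NeZero p := ⟨h.hp.ne_zero⟩
  have hq1 : q - 1 + 1 = q := Nat.succ_pred_eq_of_pos h.hq.pos
  have hmul : (i : ZMod p) * (i : ZMod p) ^ (q - 1) = 1 := by
    rw [← pow_succ', hq1, ← h.hord, pow_orderOf_eq_one]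
  exact (ZMod.isUnit_iff_coprime i p).mp (IsUnit.of_mul_eq_one _ hmul)

theorem coprime (h : Hyp p q i) : Nat.Coprime i (p * q) :=
  Nat.Coprime.mul_right h.coprime_p h.coprime_q

theorem pow_q_modeq (h : Hyp p q i) : i ^ q ≡ 1 [MOD p * q] := by
  have hpq : p ≠ q := by
    have h1 : 0 < p - 1 := by have := h.hp.two_le; omega
    have := Nat.le_of_dvd h1 h.hdvd
    omega
  have hc : Nat.Coprime p q := (Nat.coprime_primes h.hp h.hq).mpr hpq
  rw [← Nat.modEq_and_modEq_iff_modEq_mul hc]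
  constructor
  · haveI : NeZero p := ⟨h.hp.ne_zero⟩
    have hcast : ((i ^ q : ℕ) : ZMod p) = ((1 : ℕ) : ZMod p) := by
      push_cast
      rw [← h.hord, pow_orderOf_eq_one]
    exact (ZMod.natCast_eq_natCast_iff _ _ _).mp hcast
  · calc i ^ q ≡ 1 ^ q [MOD q] := h.hmod.pow q
      _ = 1 := one_pow q

/-- The unit of `ZMod (p*q)` determined by `i`. -/
def unit (h : Hyp p q i) : (ZMod (p * q))ˣ := ZMod.unitOfCoprime i h.coprime

/-- The unit of `ZMod p` determined by `i`. -/
def unitP (h : Hyp p q i) : (ZMod p)ˣ := ZMod.unitOfCoprime i h.coprime_p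

theorem unit_pow (h : Hyp p q i) : h.unit ^ q = 1 := by
  apply Units.ext
  have h2 : ((i ^ q : ℕ) : ZMod (p * q)) = ((1 : ℕ) : ZMod (p * q)) :=
    (ZMod.natCast_eq_natCast_iff _ _ _).mpr h.pow_q_modeq
  push_cast at h2
  simpa [Hyp.unit] using h2

theorem unitP_pow (h : Hyp p q i) : h.unitP ^ q = 1 := by
  apply Units.ext
  have h2 : (i : ZMod p) ^ q = 1 := by rw [← h.hord]; exact pow_orderOf_eq_one _
  simpa [Hyp.unitP] using h2

end Hyp

/-- Multiplication by a unit, as an automorphism of the (multiplicatively written)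
cyclic group `ZMod n`. -/
def zmodMulAut (n : ℕ) : (ZMod n)ˣ →* MulAut (Multiplicative (ZMod n)) where
  toFun u :=
    { toFun := fun x => ofAdd ((u : ZMod n) * x.toAdd)
      invFun := fun x => ofAdd (((u⁻¹ : (ZMod n)ˣ) : ZMod n) * x.toAdd)
      left_inv := fun x => by simp
      right_inv := fun x => by simp
      map_mul' := fun x y => by simp [mul_add, ← ofAdd_add] }
  map_one' := by ext x; simp
  map_mul' u v := by ext x; simp [mul_assoc]

/-- The function underlying the automorphism of the dihedral group induced by
multiplication by a unit on the rotation part. -/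
def dihedralAutFun (n : ℕ) (u : (ZMod n)ˣ) : DihedralGroup n → DihedralGroup n
  | .r j => .r ((u : ZMod n) * j)
  | .sr j => .sr ((u : ZMod n) * j)

/-- Multiplication of indices by a unit, as an automorphism of the dihedral group:
`a ↦ a^u`, `b ↦ b`. -/
def dihedralAut (n : ℕ) : (ZMod n)ˣ →* MulAut (DihedralGroup n) where
  toFun u :=
    { toFun := dihedralAutFun n u
      invFun := dihedralAutFun n u⁻¹
      left_inv := fun x => by cases x <;> simp [dihedralAutFun]
      right_inv := fun x => by cases x <;> simp [dihedralAutFun]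
      map_mul' := fun x y => by cases x <;> cases y <;> simp [dihedralAutFun, mul_add, mul_sub] }
  map_one' := by ext x; cases x <;> simp [dihedralAutFun]
  map_mul' u v := by ext x; cases x <;> simp [dihedralAutFun, mul_assoc]

/-- The homomorphism `ZMod q →* G` (written multiplicatively) sending `1` to a fixed
element `g` with `g ^ q = 1`. -/
def zmodPow {G : Type*} [Group G] (q : ℕ) [NeZero q] (g : G) (hg : g ^ q = 1) :
    Multiplicative (ZMod q) →* G where
  toFun x := g ^ (toAdd x).val
  map_one' := by
    show g ^ (toAdd (1 : Multiplicative (ZMod q))).val = 1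
    rw [toAdd_one, ZMod.val_zero, pow_zero]
  map_mul' x y := by
    have key : ∀ m : ℕ, g ^ (m % q) = g ^ m := fun m => by
      conv_rhs => rw [← Nat.div_add_mod m q]
      rw [pow_add, pow_mul, hg, one_pow, one_mul]
    show g ^ (toAdd (x * y)).val = g ^ (toAdd x).val * g ^ (toAdd y).val
    rw [toAdd_mul, ZMod.val_add, key, pow_add]

namespace Hyp

variable {p q i : ℕ}

/-- The action of `C_q` on `C_{pq}` sending the generator to multiplication by `i`. -/
def phiN (h : Hyp p q i) : Multiplicative (ZMod q) →* MulAut (Multiplicative (ZMod (p * q))) :=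
  haveI : NeZero q := ⟨h.hq.ne_zero⟩
  zmodPow q (zmodMulAut (p * q) h.unit) (by rw [← map_pow, h.unit_pow, map_one])

/-- The action of `C_q` on `D_{2pq}` sending the generator to `τ` (`τ(a) = a^i`, `τ(b) = b`). -/
def phiG (h : Hyp p q i) : Multiplicative (ZMod q) →* MulAut (DihedralGroup (p * q)) :=
  haveI : NeZero q := ⟨h.hq.ne_zero⟩
  zmodPow q (dihedralAut (p * q) h.unit) (by rw [← map_pow, h.unit_pow, map_one])

/-- The action of `C_q` on `C_p` sending the generator to multiplication by `i`. -/
def phiF (h : Hyp p q i) : Multiplicative (ZMod q) →* MulAut (Multiplicative (ZMod p)) :=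
  haveI : NeZero q := ⟨h.hq.ne_zero⟩
  zmodPow q (zmodMulAut p h.unitP) (by rw [← map_pow, h.unitP_pow, map_one])

end Hyp

/-- The group `N_{pq²} = ⟨a, c ∣ a^{pq} = c^q = 1, c a c⁻¹ = a^i⟩ = C_{pq} ⋊ C_q`. -/
abbrev Npq2 {p q i : ℕ} (h : Hyp p q i) : Type :=
  Multiplicative (ZMod (p * q)) ⋊[h.phiN] Multiplicative (ZMod q)

/-- The group `G_{p,q} = D_{2pq} ⋊_φ C_q`. -/
abbrev Gpq {p q i : ℕ} (h : Hyp p q i) : Type :=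
  DihedralGroup (p * q) ⋊[h.phiG] Multiplicative (ZMod q)

/-- The Frobenius group `F_{p,q} = C_p ⋊ C_q` (the nonabelian group of order `pq`). -/
abbrev Fpq {p q i : ℕ} (h : Hyp p q i) : Type :=
  Multiplicative (ZMod p) ⋊[h.phiF] Multiplicative (ZMod q)

variable {p q i : ℕ}

/-- The generator `a` of `N_{pq²}`. -/
def aN (h : Hyp p q i) : Npq2 h := SemidirectProduct.inl (ofAdd 1)

/-- The generator `c` of `N_{pq²}`. -/
def cN (h : Hyp p q i) : Npq2 h := SemidirectProduct.inr (ofAdd 1)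

/-- The generator `a` of `G_{p,q}`. -/
def aG (h : Hyp p q i) : Gpq h := SemidirectProduct.inl (DihedralGroup.r 1)

/-- The generator `b` of `G_{p,q}`. -/
def bG (h : Hyp p q i) : Gpq h := SemidirectProduct.inl (DihedralGroup.sr 0)

/-- The generator `c` of `G_{p,q}`. -/
def cG (h : Hyp p q i) : Gpq h := SemidirectProduct.inr (ofAdd 1)

/-- The real conjugacy class `(g)^± = (g) ∪ (g⁻¹)`. -/
def realClass {G : Type*} [Group G] (g : G) : Set G := {x | IsConj g x ∨ IsConj g⁻¹ x}

/-- `N` is a normal subgroup whose quotient is an `ℓ`-group (the quotient has `ℓ`-power order,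
i.e. `N` has `ℓ`-power index). -/
def OQuot {G : Type*} [Group G] (ℓ : ℕ) (N : Subgroup G) : Prop :=
  N.Normal ∧ ∃ k : ℕ, N.index = ℓ ^ k

/-- `H` is a large subgroup of `G`: it contains `O^ℓ(G)`, the smallest normal subgroup
with `ℓ`-group quotient, for some prime `ℓ`. -/
def IsLarge {G : Type*} [Group G] (H : Subgroup G) : Prop :=
  ∃ ℓ : ℕ, Nat.Prime ℓ ∧
    ∃ N : Subgroup G, OQuot ℓ N ∧ (∀ M : Subgroup G, OQuot ℓ M → N ≤ M) ∧ N ≤ H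

section Reps

variable {k : Type*} [CommSemiring k] {G : Type*} [Group G]

/-- The subspace `V^H` of `H`-fixed vectors of a representation. -/
def fixedPts {V : Type*} [AddCommMonoid V] [Module k V]
    (ρ : Representation k G V) (H : Subgroup G) : Submodule k V where
  carrier := {v | ∀ g ∈ H, ρ g v = v}
  add_mem' := by
    intro a b ha hb g hg
    rw [map_add, ha g hg, hb g hg]
  zero_mem' := by
    intro g hg
    rw [map_zero]
  smul_mem' := by
    intro c v hv g hg
    rw [map_smul, hv g hg]

end Reps

/-- The weak gap condition for a real representation: `dim V^P ≥ 2 dim V^H` for all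
`P < H ≤ G` with `P` of prime power order. -/
def WeakGap {G : Type*} [Group G] {V : Type*} [AddCommGroup V] [Module ℝ V]
    (ρ : Representation ℝ G V) : Prop :=
  ∀ P H : Subgroup G, P < H → (∃ ℓ k : ℕ, Nat.Prime ℓ ∧ Nat.card P = ℓ ^ k) →
    2 * Module.finrank ℝ (fixedPts ρ H) ≤ Module.finrank ℝ (fixedPts ρ P)

/-- Isomorphism of real representations: an equivariant linear equivalence. -/
def RepIso {G : Type*} [Group G] {U V : Type*} [AddCommGroup U] [Module ℝ U]
    [AddCommGroup V] [Module ℝ V]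
    (ρU : Representation ℝ G U) (ρV : Representation ℝ G V) : Prop :=
  ∃ e : U ≃ₗ[ℝ] V, ∀ (g : G) (u : U), e (ρU g u) = ρV g (e u)

/-- Two real representations are `𝒫`-matched if their restrictions to every subgroup of
prime power order are isomorphic. -/
def PMatched {G : Type*} [Group G] {U V : Type*} [AddCommGroup U] [Module ℝ U]
    [AddCommGroup V] [Module ℝ V]
    (ρU : Representation ℝ G U) (ρV : Representation ℝ G V) : Prop :=
  ∀ P : Subgroup G, (∃ ℓ k : ℕ, Nat.Prime ℓ ∧ Nat.card P = ℓ ^ k) →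
    RepIso (ρU.comp P.subtype) (ρV.comp P.subtype)

/-- A bundled finite-dimensional-free real representation of `G`. -/
structure RealRep (G : Type*) [Group G] where
  carrier : Type
  [acg : AddCommGroup carrier]
  [mod : Module ℝ carrier]
  rho : Representation ℝ G carrier

attribute [instance] RealRep.acg RealRep.mod

theorem dihedralAut_pow_r (n : ℕ) (u : (ZMod n)ˣ) (k : ℕ) (m : ZMod n) :
    ((dihedralAut n u) ^ k) (DihedralGroup.r m)
      = DihedralGroup.r (((u ^ k : (ZMod n)ˣ) : ZMod n) * m) := by
  induction k generalizing m with
  | zero => simp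
  | succ k ih =>
    rw [pow_succ, MulAut.mul_apply]
    have h1 : (dihedralAut n u) (DihedralGroup.r m) = DihedralGroup.r ((u : ZMod n) * m) := rfl
    rw [h1, ih, pow_succ, Units.val_mul, mul_assoc]

theorem Hyp.phiG_r (h : Hyp p q i) (z : Multiplicative (ZMod q)) (m : ZMod (p * q)) :
    h.phiG z (DihedralGroup.r m)
      = DihedralGroup.r (((h.unit ^ (toAdd z).val : (ZMod (p * q))ˣ) : ZMod (p * q)) * m) := by
  have h1 : h.phiG z = (dihedralAut (p * q) h.unit) ^ (toAdd z).val := rfl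
  rw [h1, dihedralAut_pow_r]

theorem r_inv (n : ℕ) (m : ZMod n) : (DihedralGroup.r m)⁻¹ = DihedralGroup.r (-m) := rfl

/-- The subgroup `N_{pq²} = {(aˡ, cᵐ)}` of `G_{p,q}`. -/
def NSub (h : Hyp p q i) : Subgroup (Gpq h) where
  carrier := {x | ∃ l : ZMod (p * q), x.left = DihedralGroup.r l}
  one_mem' := ⟨0, rfl⟩
  mul_mem' := by
    rintro x y ⟨lx, hx⟩ ⟨ly, hy⟩
    refine ⟨lx + (h.unit ^ (toAdd x.right).val : (ZMod (p * q))ˣ) * ly, ?_⟩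
    rw [SemidirectProduct.mul_left, hx, hy, h.phiG_r, DihedralGroup.r_mul_r]
  inv_mem' := by
    rintro x ⟨lx, hx⟩
    refine ⟨-((h.unit ^ (toAdd x.right⁻¹).val : (ZMod (p * q))ˣ) * lx), ?_⟩
    rw [SemidirectProduct.inv_left, hx, r_inv, h.phiG_r]
    congr 1
    ring

/-- The subgroup `N_{2pq} = {(bᵉaˡ, 1)} ≅ D_{2pq}` of `G_{p,q}`. -/
def N2pqSub (h : Hyp p q i) : Subgroup (Gpq h) :=
  MonoidHom.ker SemidirectProduct.rightHom

/-- The subgroup `N¹_{pq} = {(aˡ, 1)}` of `G_{p,q}`. -/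
def NpqOneSub (h : Hyp p q i) : Subgroup (Gpq h) where
  carrier := {x | x.right = 1 ∧ ∃ l : ZMod (p * q), x.left = DihedralGroup.r l}
  one_mem' := ⟨rfl, 0, rfl⟩
  mul_mem' := by
    rintro x y ⟨hx1, lx, hx⟩ ⟨hy1, ly, hy⟩
    refine ⟨by rw [SemidirectProduct.mul_right, hx1, hy1, mul_one],
      lx + (h.unit ^ (toAdd x.right).val : (ZMod (p * q))ˣ) * ly, ?_⟩
    rw [SemidirectProduct.mul_left, hx, hy, h.phiG_r, DihedralGroup.r_mul_r]
  inv_mem' := by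
    rintro x ⟨hx1, lx, hx⟩
    refine ⟨by rw [SemidirectProduct.inv_right, hx1, inv_one],
      -((h.unit ^ (toAdd x.right⁻¹).val : (ZMod (p * q))ˣ) * lx), ?_⟩
    rw [SemidirectProduct.inv_left, hx, r_inv, h.phiG_r]
    congr 1
    ring

/-- The subgroup `N²_{pq} = {(a^{qs}, cᵐ)}` of `G_{p,q}`. -/
def NpqTwoSub (h : Hyp p q i) : Subgroup (Gpq h) where
  carrier := {x | ∃ s : ZMod (p * q), x.left = DihedralGroup.r ((q : ZMod (p * q)) * s)}
  one_mem' := ⟨0, by simp [-DihedralGroup.r_zero, DihedralGroup.one_def]⟩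
  mul_mem' := by
    rintro x y ⟨sx, hx⟩ ⟨sy, hy⟩
    refine ⟨sx + (h.unit ^ (toAdd x.right).val : (ZMod (p * q))ˣ) * sy, ?_⟩
    rw [SemidirectProduct.mul_left, hx, hy, h.phiG_r, DihedralGroup.r_mul_r]
    congr 1
    ring
  inv_mem' := by
    rintro x ⟨sx, hx⟩
    refine ⟨-((h.unit ^ (toAdd x.right⁻¹).val : (ZMod (p * q))ˣ) * sx), ?_⟩
    rw [SemidirectProduct.inv_left, hx, r_inv, h.phiG_r]
    congr 1
    ring

/-- The subgroup `N_p = {(a^{qs}, 1)}` of `G_{p,q}`. -/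
def NpSub (h : Hyp p q i) : Subgroup (Gpq h) where
  carrier := {x | x.right = 1 ∧ ∃ s : ZMod (p * q), x.left = DihedralGroup.r ((q : ZMod (p * q)) * s)}
  one_mem' := ⟨rfl, 0, by simp [-DihedralGroup.r_zero, DihedralGroup.one_def]⟩
  mul_mem' := by
    rintro x y ⟨hx1, sx, hx⟩ ⟨hy1, sy, hy⟩
    refine ⟨by rw [SemidirectProduct.mul_right, hx1, hy1, mul_one],
      sx + (h.unit ^ (toAdd x.right).val : (ZMod (p * q))ˣ) * sy, ?_⟩
    rw [SemidirectProduct.mul_left, hx, hy, h.phiG_r, DihedralGroup.r_mul_r]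
    congr 1
    ring
  inv_mem' := by
    rintro x ⟨hx1, sx, hx⟩
    refine ⟨by rw [SemidirectProduct.inv_right, hx1, inv_one],
      -((h.unit ^ (toAdd x.right⁻¹).val : (ZMod (p * q))ˣ) * sx), ?_⟩
    rw [SemidirectProduct.inv_left, hx, r_inv, h.phiG_r]
    congr 1
    ring

/-- The subgroup `N_q = {(a^{ps}, 1)}` of `G_{p,q}`. -/
def NqSub (h : Hyp p q i) : Subgroup (Gpq h) where
  carrier := {x | x.right = 1 ∧ ∃ s : ZMod (p * q), x.left = DihedralGroup.r ((p : ZMod (p * q)) * s)}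
  one_mem' := ⟨rfl, 0, by simp [-DihedralGroup.r_zero, DihedralGroup.one_def]⟩
  mul_mem' := by
    rintro x y ⟨hx1, sx, hx⟩ ⟨hy1, sy, hy⟩
    refine ⟨by rw [SemidirectProduct.mul_right, hx1, hy1, mul_one],
      sx + (h.unit ^ (toAdd x.right).val : (ZMod (p * q))ˣ) * sy, ?_⟩
    rw [SemidirectProduct.mul_left, hx, hy, h.phiG_r, DihedralGroup.r_mul_r]
    congr 1
    ring
  inv_mem' := by
    rintro x ⟨hx1, sx, hx⟩
    refine ⟨by rw [SemidirectProduct.inv_right, hx1, inv_one],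
      -((h.unit ^ (toAdd x.right⁻¹).val : (ZMod (p * q))ˣ) * sx), ?_⟩
    rw [SemidirectProduct.inv_left, hx, r_inv, h.phiG_r]
    congr 1
    ring

end Mizerka

/-!
Write `⟨x, z⟩` for the element `x · c^z` of `G_{p,q}`, so that `⟨r j, z⟩ = aʲcᶻ` and
`⟨sr t, z⟩ = b aᵗ cᶻ`, and let `w = i^z` (`h.unitHom z`), the unit by which `cᶻ` acts on `a`.

Since `i ≡ 1 (mod q)` and `i` has order `q` modulo `p`, for `z ≠ 0` the sum
`1 + w + ⋯ + w^{q-1}` vanishes modulo `pq` (modulo `p` it is a geometric sum of a nontrivial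
`q`-th root of unity, modulo `q` it is `q`), so `⟨r j, z⟩ ^ q = 1`. The elements `⟨sr t, 1⟩` are
involutions and `⟨r j, 1⟩` has order `pq` exactly when `j` is a unit. Hence the elements of
mixed order are the `⟨r j, 1⟩` with `j ∈ (ℤ/pq)ˣ`, of order `pq`, and the `⟨sr t, z⟩` with
`z ≠ 0`, of order `2q`.

Conjugation and inversion multiply the exponent of `⟨r j, 1⟩` exactly by the elements of
`⟨-i⟩ ≤ (ℤ/pq)ˣ`, a subgroup of order `2q`; and, `1 + w` being a unit modulo `pq`, the real
class of `⟨sr 0, z⟩` is the set of all `⟨sr t, ±z⟩`. So the mixed real classes are indexed by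
`(ℤ/pq)ˣ/⟨-i⟩` and `(ℤ/q)ˣ/⟨-1⟩`, of orders `(p-1)(q-1)/2q = r(q-1)/2` and `(q-1)/2`.
-/

theorem card_range_eq_card_quotient {G β : Type*} [Group G] (H : Subgroup G) {f : G → β}
    (hf : ∀ a b, f a = f b ↔ a⁻¹ * b ∈ H) : Nat.card (Set.range f) = Nat.card (G ⧸ H) :=
  Nat.card_congr <| (Setoid.quotientKerEquivRange f).symm.trans <|
    Quotient.congrRight fun a b => (hf a b).trans QuotientGroup.leftRel_apply.symm

section ZPowersNeg

variable {M : Type*} [Group M] [HasDistribNeg M]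

theorem exists_pow_or_neg_pow_of_mem_zpowers_neg [Finite M] {x v : M}
    (hv : v ∈ Subgroup.zpowers (-x)) : ∃ k : ℕ, v = x ^ k ∨ v = -x ^ k := by
  obtain ⟨k, rfl⟩ := mem_powers_iff_mem_zpowers.mpr hv
  rcases Nat.even_or_odd k with hk | hk
  exacts [⟨k, Or.inl (hk.neg_pow x)⟩, ⟨k, Or.inr (hk.neg_pow x)⟩]

theorem mem_zpowers_neg_one_iff [Finite M] {v : M} :
    v ∈ Subgroup.zpowers (-1) ↔ v = 1 ∨ v = -1 := by
  refine ⟨fun hv => ?_, ?_⟩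
  · obtain ⟨k, hk⟩ := exists_pow_or_neg_pow_of_mem_zpowers_neg hv
    simpa using hk
  · rintro (rfl | rfl)
    exacts [Subgroup.one_mem _, Subgroup.mem_zpowers _]

theorem pow_mem_zpowers_neg {x : M} {n : ℕ} (hn : Odd n) (hx : x ^ n = 1) (k : ℕ) :
    x ^ k ∈ Subgroup.zpowers (-x) := by
  have hk : x ^ k = (-x) ^ ((n + 1) * k) := by
    rw [pow_mul, Even.neg_pow (Odd.add_one hn), pow_succ, hx, one_mul]
  rw [hk]
  exact Subgroup.pow_mem _ (Subgroup.mem_zpowers _) _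

theorem neg_mem_zpowers_neg {x : M} {n : ℕ} (hn : Odd n) (hx : x ^ n = 1) {v : M}
    (hv : v ∈ Subgroup.zpowers (-x)) : -v ∈ Subgroup.zpowers (-x) := by
  have hneg : -v = (-x) ^ n * v := by rw [hn.neg_pow, hx, neg_one_mul]
  rw [hneg]
  exact Subgroup.mul_mem _ (Subgroup.pow_mem _ (Subgroup.mem_zpowers _) _) hv

end ZPowersNeg

theorem orderOf_neg_of_odd {M : Type*} [Monoid M] [HasDistribNeg M] (hM : (-1 : M) ≠ 1)
    {x : M} (hx : Odd (orderOf x)) : orderOf (-x) = 2 * orderOf x := by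
  have h2 : orderOf (-1 : M) = 2 := orderOf_eq_prime (by simp) hM
  rw [← neg_one_mul, (Commute.neg_one_left x).orderOf_mul_eq_mul_orderOf_of_coprime
    (by rw [h2]; exact Nat.coprime_two_left.mpr hx), h2]

theorem ZMod.card_units_quotient_zpowers_neg_mul {n : ℕ} [NeZero n] (hn : 2 < n)
    {u : (ZMod n)ˣ} (hu : Odd (orderOf u)) :
    Nat.card ((ZMod n)ˣ ⧸ Subgroup.zpowers (-u)) * (2 * orderOf u) = n.totient := by
  have : Fact (2 < n) := ⟨hn⟩
  have hneg : (-1 : (ZMod n)ˣ) ≠ 1 := fun h1 =>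
    ZMod.neg_one_ne_one (by simpa using congrArg Units.val h1)
  rw [← orderOf_neg_of_odd hneg hu, ← Nat.card_zpowers,
    ← Subgroup.card_eq_card_quotient_mul_card_subgroup, Nat.card_eq_fintype_card,
    ZMod.card_units_eq_totient]

section ChineseRemainder

variable {m n : ℕ}

theorem ZMod.chineseRemainder_apply (hmn : m.Coprime n) (x : ZMod (m * n)) :
    ZMod.chineseRemainder hmn x =
      (ZMod.castHom (dvd_mul_right m n) (ZMod m) x, ZMod.castHom (dvd_mul_left n m) (ZMod n) x) :=
  Prod.ext (Prod.fst_zmod_cast x) (Prod.snd_zmod_cast x)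

theorem ZMod.eq_zero_of_castHom_eq_zero (hmn : m.Coprime n) {x : ZMod (m * n)}
    (hm : ZMod.castHom (dvd_mul_right m n) (ZMod m) x = 0)
    (hn : ZMod.castHom (dvd_mul_left n m) (ZMod n) x = 0) : x = 0 :=
  (ZMod.chineseRemainder hmn).injective <| by
    rw [map_zero, ZMod.chineseRemainder_apply, hm, hn, Prod.mk_zero_zero]

theorem ZMod.isUnit_of_isUnit_castHom (hmn : m.Coprime n) {x : ZMod (m * n)}
    (hm : IsUnit (ZMod.castHom (dvd_mul_right m n) (ZMod m) x))
    (hn : IsUnit (ZMod.castHom (dvd_mul_left n m) (ZMod n) x)) : IsUnit x :=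
  (MulEquiv.isUnit_map (ZMod.chineseRemainder hmn).toMulEquiv).mp <| by
    simpa [ZMod.chineseRemainder_apply, Prod.isUnit_iff] using And.intro hm hn

end ChineseRemainder

theorem IsConj.inv {G : Type*} [Group G] {a b : G} (h : IsConj a b) : IsConj a⁻¹ b⁻¹ := by
  obtain ⟨c, rfl⟩ := isConj_iff.mp h
  exact isConj_iff.mpr ⟨c, by group⟩

theorem SemidirectProduct.mk_conj_mk {N C : Type*} [Group N] [CommGroup C]
    {φ : C →* MulAut N} (g x : N) (c m : C) :
    (⟨g, c⟩ : N ⋊[φ] C) * ⟨x, m⟩ * (⟨g, c⟩ : N ⋊[φ] C)⁻¹ = ⟨g * φ c x * φ m g⁻¹, m⟩ := by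
  ext
  · simp only [SemidirectProduct.mul_left, SemidirectProduct.inv_left,
      SemidirectProduct.mul_right]
    rw [← MulAut.mul_apply, ← map_mul, mul_inv_cancel_comm]
  · simp

theorem DihedralGroup.orderOf_r_eq_self_iff {n : ℕ} [NeZero n] (j : ZMod n) :
    orderOf (DihedralGroup.r j) = n ↔ IsUnit j := by
  rw [DihedralGroup.orderOf_r, Nat.div_eq_self, ← ZMod.natCast_zmod_val j,
    ZMod.isUnit_iff_coprime, Nat.coprime_comm, Nat.Coprime]
  simp [NeZero.ne n]

namespace Mizerka

open DihedralGroup SemidirectProduct Multiplicative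

section RealClass

variable {G : Type*} [Group G]

theorem mem_realClass_self (g : G) : g ∈ realClass g := Or.inl (IsConj.refl g)

theorem mem_realClass_symm {g x : G} (hx : x ∈ realClass g) : g ∈ realClass x := by
  rcases hx with hx | hx
  · exact Or.inl hx.symm
  · exact Or.inr (by simpa using hx.symm.inv)

theorem realClass_subset_of_mem {g x : G} (hx : x ∈ realClass g) :
    realClass x ⊆ realClass g := by
  rintro y (hy | hy) <;> rcases hx with hx | hx
  · exact Or.inl (hx.trans hy)
  · exact Or.inr (hx.trans hy)
  · exact Or.inr (hx.inv.trans hy)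
  · exact Or.inl (by simpa using hx.inv.trans hy)

theorem realClass_eq_iff_mem {g x : G} : realClass x = realClass g ↔ x ∈ realClass g :=
  ⟨fun h => h ▸ mem_realClass_self x, fun hx =>
    (realClass_subset_of_mem hx).antisymm (realClass_subset_of_mem (mem_realClass_symm hx))⟩

end RealClass

def HasTwoPrimeDivisors (n : ℕ) : Prop :=
  ∃ ℓ₁ ℓ₂ : ℕ, Nat.Prime ℓ₁ ∧ Nat.Prime ℓ₂ ∧ ℓ₁ ≠ ℓ₂ ∧ ℓ₁ ∣ n ∧ ℓ₂ ∣ n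

theorem hasTwoPrimeDivisors_mul {ℓ₁ ℓ₂ : ℕ} (h₁ : ℓ₁.Prime) (h₂ : ℓ₂.Prime) (hne : ℓ₁ ≠ ℓ₂) :
    HasTwoPrimeDivisors (ℓ₁ * ℓ₂) :=
  ⟨ℓ₁, ℓ₂, h₁, h₂, hne, dvd_mul_right _ _, dvd_mul_left _ _⟩

theorem not_hasTwoPrimeDivisors_of_dvd_prime {n ℓ : ℕ} (hℓ : ℓ.Prime) (hn : n ∣ ℓ) :
    ¬ HasTwoPrimeDivisors n := by
  rintro ⟨ℓ₁, ℓ₂, h₁, h₂, hne, hd₁, hd₂⟩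
  exact hne (((Nat.prime_dvd_prime_iff_eq h₁ hℓ).mp (hd₁.trans hn)).trans
    ((Nat.prime_dvd_prime_iff_eq h₂ hℓ).mp (hd₂.trans hn)).symm)

theorem HasTwoPrimeDivisors.eq_of_dvd_mul {n ℓ₁ ℓ₂ : ℕ} (hn : HasTwoPrimeDivisors n)
    (h₁ : ℓ₁.Prime) (h₂ : ℓ₂.Prime) (hdvd : n ∣ ℓ₁ * ℓ₂) : n = ℓ₁ * ℓ₂ := by
  obtain ⟨a, b, ha, hb, hne, hda, hdb⟩ := hn
  have mem : ∀ {c}, c.Prime → c ∣ n → c = ℓ₁ ∨ c = ℓ₂ := fun hc hcn =>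
    ((Nat.Prime.dvd_mul hc).mp (hcn.trans hdvd)).imp
      (Nat.prime_dvd_prime_iff_eq hc h₁).mp (Nat.prime_dvd_prime_iff_eq hc h₂).mp
  have key : ℓ₁ ∣ n ∧ ℓ₂ ∣ n ∧ ℓ₁ ≠ ℓ₂ := by
    rcases mem ha hda with rfl | rfl <;> rcases mem hb hdb with rfl | rfl <;> tauto
  exact Nat.dvd_antisymm hdvd
    (((Nat.coprime_primes h₁ h₂).mpr key.2.2).mul_dvd_of_dvd_of_dvd key.1 key.2.1)

-- `prim G` is the cardinality of this set.
def mixedRealClasses (G : Type*) [Group G] : Set (Set G) :=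
  {S | ∃ g : G, S = realClass g ∧ HasTwoPrimeDivisors (orderOf g)}

section ZModMul

variable {p q : ℕ} [Fact p.Prime] {w : ZMod (p * q)}

theorem geom_sum_eq_zero_of_castHom_eq_one (hpq : p.Coprime q) (hw : w ^ q = 1)
    (hwp : ZMod.castHom (dvd_mul_right p q) (ZMod p) w ≠ 1)
    (hwq : ZMod.castHom (dvd_mul_left q p) (ZMod q) w = 1) :
    ∑ t ∈ Finset.range q, w ^ t = 0 := by
  apply ZMod.eq_zero_of_castHom_eq_zero hpq
  · have hgeom := geom_sum_mul (ZMod.castHom (dvd_mul_right p q) (ZMod p) w) q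
    rw [← map_pow, hw, map_one, sub_self, mul_eq_zero, sub_eq_zero] at hgeom
    simpa [map_sum] using hgeom.resolve_right hwp
  · simp only [map_sum, map_pow, hwq, one_pow, Finset.sum_const, Finset.card_range]
    simp

theorem isUnit_one_add_of_castHom_eq_one (hpq : p.Coprime q) (hp : p ≠ 2) (hq : Odd q)
    (hw : w ^ q = 1) (hwq : ZMod.castHom (dvd_mul_left q p) (ZMod q) w = 1) :
    IsUnit (1 + w) := by
  apply ZMod.isUnit_of_isUnit_castHom hpq
  · refine isUnit_iff_ne_zero.mpr fun h0 => ?_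
    have hneg : ZMod.castHom (dvd_mul_right p q) (ZMod p) w = -1 := by
      rw [map_add, map_one] at h0
      linear_combination h0
    have hpow := congrArg (ZMod.castHom (dvd_mul_right p q) (ZMod p)) hw
    rw [map_pow, hneg, hq.neg_one_pow, map_one] at hpow
    have : Fact (2 < p) := ⟨lt_of_le_of_ne (Fact.out : p.Prime).two_le (Ne.symm hp)⟩
    exact ZMod.neg_one_ne_one hpow
  · rw [map_add, map_one, hwq, one_add_one_eq_two]
    exact (ZMod.unitOfCoprime 2 (Nat.coprime_two_left.mpr hq)).isUnit

end ZModMul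

theorem multiplicative_zmod_pow_eq_one {n : ℕ} [NeZero n] (z : Multiplicative (ZMod n)) :
    z ^ n = 1 := by
  simpa using pow_card_eq_one (x := z)

theorem zmodPow_ofAdd_natCast {G : Type*} [Group G] (q : ℕ) [NeZero q] (g : G)
    (hg : g ^ q = 1) (k : ℕ) : zmodPow q g hg (ofAdd (k : ZMod q)) = g ^ k := by
  show g ^ (k : ZMod q).val = g ^ k
  rw [ZMod.val_natCast, ← pow_mod_orderOf, ← pow_mod_orderOf g k,
    Nat.mod_mod_of_dvd _ (orderOf_dvd_of_pow_eq_one hg)]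

variable {p q i : ℕ}

namespace Hyp

theorem three_le_q (h : Hyp p q i) : 3 ≤ q := by
  have h2 : 2 ≤ q := h.hq.two_le
  have hodd : q % 2 = 1 := Nat.odd_iff.mp h.hoddq
  omega

theorem p_ne_q (h : Hyp p q i) : p ≠ q := by
  have hp : 1 < p := h.hp.one_lt
  have hqp : q ≤ p - 1 := Nat.le_of_dvd (Nat.sub_pos_of_lt hp) h.hdvd
  omega

theorem coprime_pq (h : Hyp p q i) : p.Coprime q := (Nat.coprime_primes h.hp h.hq).mpr h.p_ne_q

theorem orderOf_unit (h : Hyp p q i) : orderOf h.unit = q := by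
  have : Fact q.Prime := ⟨h.hq⟩
  refine orderOf_eq_prime h.unit_pow fun h1 => h.hq.one_lt.ne' ?_
  have hi : ((i : ℕ) : ZMod p) = 1 := by
    simpa [Hyp.unit] using
      congrArg (fun v : (ZMod (p * q))ˣ => ZMod.castHom (dvd_mul_right p q) (ZMod p) v) h1
  rw [← h.hord, hi, orderOf_one]

def unitHom (h : Hyp p q i) : Multiplicative (ZMod q) →* (ZMod (p * q))ˣ :=
  haveI : NeZero q := ⟨h.hq.ne_zero⟩
  zmodPow q h.unit h.unit_pow

theorem phiG_eq_dihedralAut (h : Hyp p q i) (z : Multiplicative (ZMod q)) :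
    h.phiG z = dihedralAut (p * q) (h.unitHom z) :=
  (map_pow _ _ _).symm

@[simp]
theorem phiG_apply_r (h : Hyp p q i) (z : Multiplicative (ZMod q)) (m : ZMod (p * q)) :
    h.phiG z (r m) = r ((h.unitHom z : ZMod (p * q)) * m) := by
  rw [phiG_eq_dihedralAut]
  rfl

@[simp]
theorem phiG_apply_sr (h : Hyp p q i) (z : Multiplicative (ZMod q)) (m : ZMod (p * q)) :
    h.phiG z (sr m) = sr ((h.unitHom z : ZMod (p * q)) * m) := by
  rw [phiG_eq_dihedralAut]
  rfl

theorem unitHom_ofAdd_natCast (h : Hyp p q i) (k : ℕ) :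
    h.unitHom (ofAdd (k : ZMod q)) = h.unit ^ k :=
  haveI : NeZero q := ⟨h.hq.ne_zero⟩
  zmodPow_ofAdd_natCast q h.unit h.unit_pow k

theorem unitHom_mem_zpowers (h : Hyp p q i) (z : Multiplicative (ZMod q)) :
    h.unitHom z ∈ Subgroup.zpowers (-h.unit) :=
  pow_mem_zpowers_neg h.hoddq h.unit_pow _

theorem val_unitHom_pow_q (h : Hyp p q i) (z : Multiplicative (ZMod q)) :
    (h.unitHom z : ZMod (p * q)) ^ q = 1 := by
  have : NeZero q := ⟨h.hq.ne_zero⟩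
  rw [← Units.val_pow_eq_pow_val, ← map_pow, multiplicative_zmod_pow_eq_one, map_one,
    Units.val_one]

theorem castHom_q_unitHom (h : Hyp p q i) (z : Multiplicative (ZMod q)) :
    ZMod.castHom (dvd_mul_left q p) (ZMod q) (h.unitHom z) = 1 := by
  have hi : ((i : ℕ) : ZMod q) = 1 := by
    simpa using (ZMod.natCast_eq_natCast_iff i 1 q).mpr h.hmod
  simp [unitHom, zmodPow, Hyp.unit, hi]

theorem castHom_p_unitHom_ne_one (h : Hyp p q i) {z : Multiplicative (ZMod q)} (hz : z ≠ 1) :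
    ZMod.castHom (dvd_mul_right p q) (ZMod p) (h.unitHom z) ≠ 1 := by
  have : NeZero q := ⟨h.hq.ne_zero⟩
  have hcast : ZMod.castHom (dvd_mul_right p q) (ZMod p) (h.unitHom z) =
      (i : ZMod p) ^ (toAdd z).val := by
    simp [unitHom, zmodPow, Hyp.unit]
  rw [hcast]
  refine pow_ne_one_of_lt_orderOf ?_ (by rw [h.hord]; exact ZMod.val_lt _)
  rwa [ne_eq, ZMod.val_eq_zero, ← toAdd_one, toAdd.injective.eq_iff]

end Hyp

variable (h : Hyp p q i)

theorem mk_r_pow (j : ZMod (p * q)) (z : Multiplicative (ZMod q)) (k : ℕ) :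
    (⟨r j, z⟩ : Gpq h) ^ k =
      ⟨r ((∑ t ∈ Finset.range k, (h.unitHom z : ZMod (p * q)) ^ t) * j), z ^ k⟩ := by
  induction k with
  | zero =>
    rw [pow_zero, pow_zero, Finset.sum_range_zero, zero_mul]
    rfl
  | succ k ih =>
    rw [pow_succ, ih]
    ext
    · rw [mul_left, Hyp.phiG_apply_r, r_mul_r, map_pow, Units.val_pow_eq_pow_val,
        Finset.sum_range_succ, add_mul]
    · rw [mul_right, pow_succ]

theorem mk_r_pow_q_of_ne_one (j : ZMod (p * q)) {z : Multiplicative (ZMod q)} (hz : z ≠ 1) :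
    (⟨r j, z⟩ : Gpq h) ^ q = 1 := by
  have : Fact p.Prime := ⟨h.hp⟩
  have : NeZero q := ⟨h.hq.ne_zero⟩
  have hsum := geom_sum_eq_zero_of_castHom_eq_one h.coprime_pq (h.val_unitHom_pow_q z)
    (h.castHom_p_unitHom_ne_one hz) (h.castHom_q_unitHom z)
  rw [mk_r_pow, hsum, zero_mul, multiplicative_zmod_pow_eq_one]
  rfl

theorem mk_sr_one_sq (t : ZMod (p * q)) : (⟨sr t, 1⟩ : Gpq h) ^ 2 = 1 := by
  rw [show (⟨sr t, 1⟩ : Gpq h) = inl (sr t) from rfl, ← map_pow, sq, sr_mul_self, map_one]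

theorem orderOf_mk_r_one (j : ZMod (p * q)) : orderOf (⟨r j, 1⟩ : Gpq h) = orderOf (r j) :=
  orderOf_injective inl inl_injective (r j)

theorem orderOf_mk_sr_zero {z : Multiplicative (ZMod q)} (hz : z ≠ 1) :
    orderOf (⟨sr 0, z⟩ : Gpq h) = 2 * q := by
  have : Fact q.Prime := ⟨h.hq⟩
  have hcomm : Commute (inl (sr 0) : Gpq h) (inr z) := by
    ext <;> simp
  have hz : orderOf (inr z : Gpq h) = q := by
    rw [orderOf_injective _ inr_injective, orderOf_eq_prime (multiplicative_zmod_pow_eq_one z) hz]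
  have hsr : orderOf (inl (sr 0) : Gpq h) = 2 := by
    rw [orderOf_injective _ inl_injective, orderOf_sr]
  rw [mk_eq_inl_mul_inr, hcomm.orderOf_mul_eq_mul_orderOf_of_coprime
    (by rw [hsr, hz]; exact Nat.coprime_two_left.mpr h.hoddq), hz, hsr]

theorem mk_r_conj_mk_r_one (k j : ZMod (p * q)) (c : Multiplicative (ZMod q)) :
    (⟨r k, c⟩ : Gpq h) * ⟨r j, 1⟩ * (⟨r k, c⟩ : Gpq h)⁻¹ = ⟨r (h.unitHom c * j), 1⟩ := by
  rw [mk_conj_mk]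
  congr 1
  simp

theorem mk_sr_conj_mk_r_one (k j : ZMod (p * q)) (c : Multiplicative (ZMod q)) :
    (⟨sr k, c⟩ : Gpq h) * ⟨r j, 1⟩ * (⟨sr k, c⟩ : Gpq h)⁻¹ = ⟨r (-(h.unitHom c * j)), 1⟩ := by
  rw [mk_conj_mk]
  congr 1
  simp

theorem exists_conj_mk_r_one (g : Gpq h) (j : ZMod (p * q)) :
    ∃ v ∈ Subgroup.zpowers (-h.unit), g * ⟨r j, 1⟩ * g⁻¹ = ⟨r (v * j), 1⟩ := by
  obtain ⟨k | k, c⟩ := g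
  · exact ⟨h.unitHom c, h.unitHom_mem_zpowers c, mk_r_conj_mk_r_one h k j c⟩
  · refine ⟨-h.unitHom c, neg_mem_zpowers_neg h.hoddq h.unit_pow (h.unitHom_mem_zpowers c), ?_⟩
    rw [mk_sr_conj_mk_r_one, Units.val_neg, neg_mul]

theorem mem_realClass_mk_r_one_iff (j : ZMod (p * q)) (x : Gpq h) :
    x ∈ realClass (⟨r j, 1⟩ : Gpq h) ↔
      ∃ v ∈ Subgroup.zpowers (-h.unit), x = ⟨r (v * j), 1⟩ := by
  constructor
  · rintro (hx | hx) <;> obtain ⟨g, rfl⟩ := isConj_iff.mp hx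
    · exact exists_conj_mk_r_one h g j
    · obtain ⟨v, hv, he⟩ := exists_conj_mk_r_one h g (-j)
      refine ⟨-v, neg_mem_zpowers_neg h.hoddq h.unit_pow hv, ?_⟩
      rw [show (⟨r j, 1⟩ : Gpq h)⁻¹ = ⟨r (-j), 1⟩ by ext <;> simp, he, Units.val_neg, neg_mul,
        mul_neg]
  · rintro ⟨v, hv, rfl⟩
    obtain ⟨k, rfl | rfl⟩ := exists_pow_or_neg_pow_of_mem_zpowers_neg hv <;>
      rw [← h.unitHom_ofAdd_natCast] <;> refine Or.inl (isConj_iff.mpr ?_)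
    · exact ⟨⟨r 0, ofAdd (k : ZMod q)⟩, mk_r_conj_mk_r_one h _ _ _⟩
    · exact ⟨⟨sr 0, ofAdd (k : ZMod q)⟩, by rw [mk_sr_conj_mk_r_one, Units.val_neg, neg_mul]⟩

theorem exists_conj_mk_sr (g : Gpq h) (t : ZMod (p * q)) (z : Multiplicative (ZMod q)) :
    ∃ t', g * ⟨sr t, z⟩ * g⁻¹ = ⟨sr t', z⟩ := by
  obtain ⟨k | k, c⟩ := g <;> rw [mk_conj_mk] <;> simp

theorem isConj_mk_sr_zero (t : ZMod (p * q)) (z : Multiplicative (ZMod q)) :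
    IsConj (⟨sr 0, z⟩ : Gpq h) ⟨sr t, z⟩ := by
  have : Fact p.Prime := ⟨h.hp⟩
  obtain ⟨u, hu⟩ := isUnit_one_add_of_castHom_eq_one h.coprime_pq
    (by rintro rfl; exact Nat.not_odd_iff_even.mpr even_two h.hoddp) h.hoddq
    (h.val_unitHom_pow_q z) (h.castHom_q_unitHom z)
  -- conjugating by `⟨r k, 1⟩` sends `⟨sr 0, z⟩` to `⟨sr (-(1 + i ^ z) * k), z⟩`
  refine isConj_iff.mpr ⟨⟨r (-(u⁻¹ * t)), 1⟩, ?_⟩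
  rw [mk_conj_mk]
  congr 1
  simp only [map_one, MulAut.one_apply, Hyp.phiG_apply_r, inv_r, r_mul_sr, sr_mul_r]
  congr 1
  have hinv : (u : ZMod (p * q)) * ↑u⁻¹ = 1 := u.mul_inv
  rw [hu] at hinv
  linear_combination t * hinv

theorem mem_realClass_mk_sr_zero_iff (z : Multiplicative (ZMod q)) (x : Gpq h) :
    x ∈ realClass (⟨sr 0, z⟩ : Gpq h) ↔ ∃ t, x = ⟨sr t, z⟩ ∨ x = ⟨sr t, z⁻¹⟩ := by
  have hinv : (⟨sr 0, z⟩ : Gpq h)⁻¹ = ⟨sr 0, z⁻¹⟩ := by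
    ext <;> simp [MulEquiv.symm_apply_eq]
  constructor
  · rintro (hx | hx) <;> obtain ⟨g, rfl⟩ := isConj_iff.mp hx
    · obtain ⟨t, ht⟩ := exists_conj_mk_sr h g 0 z
      exact ⟨t, Or.inl ht⟩
    · obtain ⟨t, ht⟩ := exists_conj_mk_sr h g 0 z⁻¹
      exact ⟨t, Or.inr (by rw [hinv, ht])⟩
  · rintro ⟨t, rfl | rfl⟩
    · exact Or.inl (isConj_mk_sr_zero h t z)
    · exact Or.inr (hinv ▸ isConj_mk_sr_zero h t z⁻¹)

theorem realClass_mk_r_eq_iff (a b : (ZMod (p * q))ˣ) :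
    realClass (⟨r a, 1⟩ : Gpq h) = realClass ⟨r b, 1⟩ ↔
      a⁻¹ * b ∈ Subgroup.zpowers (-h.unit) := by
  rw [eq_comm, realClass_eq_iff_mem, mem_realClass_mk_r_one_iff]
  constructor
  · rintro ⟨v, hv, he⟩
    have hb : b = v * a := Units.ext (by simpa using he)
    rwa [hb, mul_comm v a, inv_mul_cancel_left]
  · intro hmem
    exact ⟨a⁻¹ * b, hmem, by rw [mul_comm a⁻¹, Units.val_mul, Units.inv_mul_cancel_right]⟩

theorem realClass_mk_sr_eq_iff (m m' : (ZMod q)ˣ) :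
    realClass (⟨sr 0, ofAdd (m : ZMod q)⟩ : Gpq h) = realClass ⟨sr 0, ofAdd (m' : ZMod q)⟩ ↔
      m⁻¹ * m' ∈ Subgroup.zpowers (-1) := by
  rw [eq_comm, realClass_eq_iff_mem, mem_realClass_mk_sr_zero_iff, mem_zpowers_neg_one_iff,
    inv_mul_eq_one, inv_mul_eq_iff_eq_mul, mul_neg_one]
  simp only [SemidirectProduct.ext_iff, sr.injEq, ← ofAdd_neg, EmbeddingLike.apply_eq_iff_eq,
    Units.ext_iff, Units.val_neg, ← and_or_left, eq_comm, exists_eq_left]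

theorem realClass_mk_r_ne_realClass_mk_sr (j : ZMod (p * q)) (z : Multiplicative (ZMod q)) :
    realClass (⟨r j, 1⟩ : Gpq h) ≠ realClass ⟨sr 0, z⟩ := by
  intro he
  obtain ⟨t, ht | ht⟩ :=
    (mem_realClass_mk_sr_zero_iff h z _).mp (he ▸ mem_realClass_self (⟨r j, 1⟩ : Gpq h)) <;>
  exact nomatch congrArg SemidirectProduct.left ht

theorem hasTwoPrimeDivisors_orderOf_mk_r (j : (ZMod (p * q))ˣ) :
    HasTwoPrimeDivisors (orderOf (⟨r j, 1⟩ : Gpq h)) := by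
  have : NeZero (p * q) := ⟨Nat.mul_ne_zero h.hp.ne_zero h.hq.ne_zero⟩
  rw [orderOf_mk_r_one, (orderOf_r_eq_self_iff _).mpr j.isUnit]
  exact hasTwoPrimeDivisors_mul h.hp h.hq h.p_ne_q

theorem hasTwoPrimeDivisors_orderOf_mk_sr (m : (ZMod q)ˣ) :
    HasTwoPrimeDivisors (orderOf (⟨sr 0, ofAdd (m : ZMod q)⟩ : Gpq h)) := by
  have : Fact q.Prime := ⟨h.hq⟩
  rw [orderOf_mk_sr_zero h (by simp)]
  exact hasTwoPrimeDivisors_mul Nat.prime_two h.hq (by have := h.three_le_q; omega)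

theorem exists_realClass_eq_of_hasTwoPrimeDivisors {g : Gpq h}
    (hg : HasTwoPrimeDivisors (orderOf g)) :
    (∃ j : (ZMod (p * q))ˣ, realClass g = realClass ⟨r j, 1⟩) ∨
      ∃ m : (ZMod q)ˣ, realClass g = realClass ⟨sr 0, ofAdd (m : ZMod q)⟩ := by
  have : Fact q.Prime := ⟨h.hq⟩
  obtain ⟨j | t, z⟩ := g
  · obtain rfl | hz := eq_or_ne z 1
    · have : NeZero (p * q) := ⟨Nat.mul_ne_zero h.hp.ne_zero h.hq.ne_zero⟩
      rw [orderOf_mk_r_one] at hg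
      have hj := (orderOf_r_eq_self_iff j).mp <| hg.eq_of_dvd_mul h.hp h.hq <|
        orderOf_dvd_of_pow_eq_one (by rw [r_pow, ZMod.natCast_self, mul_zero, one_def])
      exact Or.inl ⟨hj.unit, by rw [hj.unit_spec]⟩
    · exact absurd hg (not_hasTwoPrimeDivisors_of_dvd_prime h.hq
        (orderOf_dvd_of_pow_eq_one (mk_r_pow_q_of_ne_one h j hz)))
  · obtain rfl | hz := eq_or_ne z 1
    · exact absurd hg (not_hasTwoPrimeDivisors_of_dvd_prime Nat.prime_two
        (orderOf_dvd_of_pow_eq_one (mk_sr_one_sq h t)))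
    · have hu : IsUnit (toAdd z) := isUnit_iff_ne_zero.mpr (by simpa [← toAdd_one] using hz)
      refine Or.inr ⟨hu.unit, ?_⟩
      rw [realClass_eq_iff_mem, hu.unit_spec, ofAdd_toAdd]
      exact Or.inl (isConj_mk_sr_zero h t z)

theorem mixedRealClasses_eq :
    mixedRealClasses (Gpq h) =
      Set.range (fun j : (ZMod (p * q))ˣ => realClass (⟨r j, 1⟩ : Gpq h)) ∪
        Set.range (fun m : (ZMod q)ˣ => realClass (⟨sr 0, ofAdd (m : ZMod q)⟩ : Gpq h)) := by
  ext S
  constructor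
  · rintro ⟨g, rfl, hg⟩
    rcases exists_realClass_eq_of_hasTwoPrimeDivisors h hg with ⟨j, hj⟩ | ⟨m, hm⟩
    exacts [Or.inl ⟨j, hj.symm⟩, Or.inr ⟨m, hm.symm⟩]
  · rintro (⟨j, rfl⟩ | ⟨m, rfl⟩)
    exacts [⟨_, rfl, hasTwoPrimeDivisors_orderOf_mk_r h j⟩,
      ⟨_, rfl, hasTwoPrimeDivisors_orderOf_mk_sr h m⟩]

theorem two_mul_card_mixedRealClasses :
    2 * Nat.card (mixedRealClasses (Gpq h)) = (q - 1) * ((p - 1) / q + 1) := by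
  have : NeZero q := ⟨h.hq.ne_zero⟩
  have : NeZero (p * q) := ⟨Nat.mul_ne_zero h.hp.ne_zero h.hq.ne_zero⟩
  have hdisj : Disjoint (Set.range (fun j : (ZMod (p * q))ˣ => realClass (⟨r j, 1⟩ : Gpq h)))
      (Set.range (fun m : (ZMod q)ˣ => realClass (⟨sr 0, ofAdd (m : ZMod q)⟩ : Gpq h))) :=
    Set.disjoint_left.mpr fun _ ⟨j, hj⟩ ⟨m, hm⟩ =>
      realClass_mk_r_ne_realClass_mk_sr h j _ (hj.trans hm.symm)
  rw [mixedRealClasses_eq, Nat.card_coe_set_eq, Set.ncard_union_eq hdisj, ← Nat.card_coe_set_eq,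
    ← Nat.card_coe_set_eq, card_range_eq_card_quotient _ (realClass_mk_r_eq_iff h),
    card_range_eq_card_quotient _ (realClass_mk_sr_eq_iff h)]
  have h3 := h.three_le_q
  have hA := ZMod.card_units_quotient_zpowers_neg_mul (n := p * q) (by nlinarith [h.hp.two_le])
    (h.orderOf_unit ▸ h.hoddq)
  have hB := ZMod.card_units_quotient_zpowers_neg_mul (n := q) (by omega) (u := 1) (by simp)
  rw [Nat.totient_mul h.coprime_pq, Nat.totient_prime h.hp, Nat.totient_prime h.hq,
    h.orderOf_unit] at hA
  rw [Nat.totient_prime h.hq, orderOf_one] at hB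
  obtain ⟨r, hr⟩ := h.hdvd
  rw [hr, Nat.mul_div_cancel_left _ h.hq.pos]
  rw [hr] at hA
  generalize q - 1 = Q at hA hB ⊢
  have hA' : 2 * Nat.card ((ZMod (p * q))ˣ ⧸ Subgroup.zpowers (-h.unit)) = r * Q :=
    Nat.eq_of_mul_eq_mul_left h.hq.pos (by linarith)
  linarith

end Mizerka

open Mizerka in
/-- The primary number of `G_{p,q}` (the number of real conjugacy classes of
elements whose order is divisible by at least two distinct primes) equals
`(q-1)(r+1)/2` with `r = (p-1)/q`; in particular it is at least `2`. -/
theorem statement_11 {p q i : ℕ} (h : Hyp p q i) :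
    2 * Nat.card {S : Set (Gpq h) // ∃ g : Gpq h, S = realClass g ∧
        ∃ ℓ₁ ℓ₂ : ℕ, Nat.Prime ℓ₁ ∧ Nat.Prime ℓ₂ ∧ ℓ₁ ≠ ℓ₂ ∧
          ℓ₁ ∣ orderOf g ∧ ℓ₂ ∣ orderOf g} = (q - 1) * ((p - 1) / q + 1) ∧
    2 ≤ Nat.card {S : Set (Gpq h) // ∃ g : Gpq h, S = realClass g ∧
        ∃ ℓ₁ ℓ₂ : ℕ, Nat.Prime ℓ₁ ∧ Nat.Prime ℓ₂ ∧ ℓ₁ ≠ ℓ₂ ∧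
          ℓ₁ ∣ orderOf g ∧ ℓ₂ ∣ orderOf g} := by
  have hcard := two_mul_card_mixedRealClasses h
  have hr : 1 ≤ (p - 1) / q :=
    Nat.div_pos (Nat.le_of_dvd (Nat.sub_pos_of_lt h.hp.one_lt) h.hdvd) h.hq.pos
  have hq := h.three_le_q
  refine ⟨hcard, ?_⟩
  show 2 ≤ Nat.card (mixedRealClasses (Gpq h))
  have : 2 * 2 ≤ (q - 1) * ((p - 1) / q + 1) := Nat.mul_le_mul (by omega) (by omega)
  omega
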